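/- arXiv:1907.06151 — 3 statements merged into one kernel-verified Lean document; each statement's English description precedes it below -/
import Mathlib

section
/- Let $\phi, k : \mathbb{R}_+ \to \mathbb{R}_+$ be measurable with $\|\phi\|_{L^1} + \|k\|_{L^2}^2 < 1$, and let $g : \mathbb{R}_+ \to \mathbb{R}_+$ be a measurable, locally bounded function satisfying $g(t) \le \mu + \int_0^t (k^2(t-s) + \phi(t-s)) g(s)\,ds$ for all $t \ge 0$, where $\mu > 0$. Then $g(t) \le \mu / (1 - \|\phi\|_{L^1} - \|k\|_{L^2}^2)$ for all $t \ge 0$. -/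
open MeasureTheory Set

/-- A priori bound on the expected intensity of a quadratic Hawkes process:
if `g` satisfies the renewal inequality with kernel `k² + φ` of total mass `< 1`,
then `g` is bounded by `μ / (1 - ‖φ‖₁ - ‖k‖₂²)`. -/
theorem stmt0 (φ k g : ℝ → ℝ) (μ : ℝ) (hμ : 0 < μ)
    (hφm : Measurable φ) (hkm : Measurable k) (hgm : Measurable g)
    (hφ0 : ∀ t, 0 ≤ φ t) (hk0 : ∀ t, 0 ≤ k t) (hg0 : ∀ t, 0 ≤ g t)
    (hφint : IntegrableOn φ (Ici 0)) (hk2int : IntegrableOn (fun t => k t ^ 2) (Ici 0))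
    (hnorm : (∫ t in Ici (0:ℝ), φ t) + ∫ t in Ici (0:ℝ), k t ^ 2 < 1)
    (hgloc : ∀ r : ℝ, ∃ C : ℝ, ∀ t ∈ Icc (0:ℝ) r, g t ≤ C)
    (hren : ∀ t : ℝ, 0 ≤ t →
      g t ≤ μ + ∫ s in (0:ℝ)..t, (k (t - s) ^ 2 + φ (t - s)) * g s) :
    ∀ t : ℝ, 0 ≤ t →
      g t ≤ μ / (1 - (∫ t in Ici (0:ℝ), φ t) - ∫ t in Ici (0:ℝ), k t ^ 2) := by
  set I1 := ∫ t in Ici (0:ℝ), φ t with hI1def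
  set I2 := ∫ t in Ici (0:ℝ), k t ^ 2 with hI2def
  have hI1 : 0 ≤ I1 := setIntegral_nonneg measurableSet_Ici fun x _ => hφ0 x
  have hI2 : 0 ≤ I2 := setIntegral_nonneg measurableSet_Ici fun x _ => sq_nonneg _
  set ρ := I1 + I2 with hρdef
  have hρ0 : 0 ≤ ρ := add_nonneg hI1 hI2
  have hρ1 : ρ < 1 := hnorm
  -- kernel
  set K : ℝ → ℝ := fun u => k u ^ 2 + φ u with hKdef
  have hK0 : ∀ u, 0 ≤ K u := fun u => add_nonneg (sq_nonneg _) (hφ0 u)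
  have hKm : Measurable K := (hkm.pow_const 2).add hφm
  have hKint : IntegrableOn K (Ici 0) := hk2int.add hφint
  have hKρ : ∫ u in Ici (0:ℝ), K u = ρ := by
    rw [hKdef, integral_add hk2int hφint, hρdef, add_comm]
  intro T hT
  obtain ⟨C, hC⟩ := hgloc T
  have hAne : (g '' Icc 0 T).Nonempty := ⟨g 0, 0, ⟨le_refl 0, hT⟩, rfl⟩
  have hAbdd : BddAbove (g '' Icc 0 T) := ⟨C, by rintro y ⟨x, hx, rfl⟩; exact hC x hx⟩
  set S := sSup (g '' Icc 0 T) with hSdef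
  have hgS : ∀ s ∈ Icc (0:ℝ) T, g s ≤ S := fun s hs => le_csSup hAbdd ⟨s, hs, rfl⟩
  have hS0 : 0 ≤ S := le_trans (hg0 0) (hgS 0 ⟨le_refl 0, hT⟩)
  have key : ∀ t ∈ Icc (0:ℝ) T, g t ≤ μ + ρ * S := by
    intro t ht
    refine (hren t ht.1).trans ?_
    have hKtint : IntervalIntegrable (fun s => K (t - s)) volume 0 t := by
      have h1 : IntervalIntegrable K volume 0 t := by
        rw [intervalIntegrable_iff_integrableOn_Ioc_of_le ht.1]
        exact hKint.mono_set (fun x hx => le_of_lt hx.1)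
      have := (h1.comp_sub_left t).symm
      simpa using this
    have hKtSint : IntervalIntegrable (fun s => K (t - s) * S) volume 0 t :=
      hKtint.mul_const S
    have hfint : IntervalIntegrable (fun s => K (t - s) * g s) volume 0 t := by
      rw [intervalIntegrable_iff_integrableOn_Ioc_of_le ht.1]
      refine Integrable.mono' ((hKtSint.1).mono_set (by simp [Ioc_subset_Ioc]))
        ((hKm.comp (measurable_const.sub measurable_id)).mul hgm).aestronglyMeasurable ?_
      filter_upwards [ae_restrict_mem measurableSet_Ioc] with s hs
      rw [Real.norm_eq_abs, abs_of_nonneg (mul_nonneg (hK0 _) (hg0 _))]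
      exact mul_le_mul_of_nonneg_left (hgS s ⟨le_of_lt hs.1, hs.2.trans ht.2⟩) (hK0 _)
    have step1 : (∫ s in (0:ℝ)..t, K (t - s) * g s) ≤ ∫ s in (0:ℝ)..t, K (t - s) * S := by
      refine intervalIntegral.integral_mono_on ht.1 hfint hKtSint fun s hs => ?_
      exact mul_le_mul_of_nonneg_left (hgS s ⟨hs.1, hs.2.trans ht.2⟩) (hK0 _)
    have step2 : (∫ s in (0:ℝ)..t, K (t - s) * S) = (∫ u in (0:ℝ)..t, K u) * S := by
      rw [intervalIntegral.integral_mul_const]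
      congr 1
      rw [intervalIntegral.integral_comp_sub_left (a := (0:ℝ)) (b := t) K t, sub_self, sub_zero]
    have step3 : (∫ u in (0:ℝ)..t, K u) ≤ ρ := by
      rw [← hKρ, intervalIntegral.integral_of_le ht.1]
      refine setIntegral_mono_set hKint ?_ ?_
      · filter_upwards with u using hK0 u
      · filter_upwards with u hu using le_of_lt hu.1
    have : (∫ s in (0:ℝ)..t, K (t - s) * g s) ≤ ρ * S := by
      calc (∫ s in (0:ℝ)..t, K (t - s) * g s) ≤ (∫ u in (0:ℝ)..t, K u) * S := by
            rw [← step2]; exact step1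
        _ ≤ ρ * S := mul_le_mul_of_nonneg_right step3 hS0
    linarith [this]
  have hSle : S ≤ μ + ρ * S :=
    csSup_le hAne (by rintro y ⟨x, hx, rfl⟩; exact key x hx)
  have hfin : S ≤ μ / (1 - ρ) := by
    rw [le_div_iff₀ (by linarith)]
    nlinarith
  have : g T ≤ μ / (1 - ρ) := le_trans (hgS T ⟨hT, le_refl T⟩) hfin
  have heq : 1 - ρ = 1 - I1 - I2 := by rw [hρdef]; ring
  rwa [heq] at this
end

section
/- Let $k \in L^2([0,1])$ and $\eta \in (0,1)$. Then $\int_0^1 \int_0^1 \frac{1}{|t-s|^{1+2\eta}} \int_{s \wedge t}^{s \vee t} k(s \vee t - u)^2 \, du \, ds \, dt \le \frac{1}{\eta} \int_0^1 k(t)^2 t^{-2\eta} \, dt.$ -/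
/-!
Substituting `v = max s t - u` turns the inner integral into `∫₀^{|t-s|} k²`. For fixed `t`,
let `s` range over all of `ℝ`: after translating and folding the absolute value, the `s`-integral
becomes the Hardy-type integral `2 ∫₀^∞ r^{-(1+2η)} ∫₀^r k(v)² dv dr`, and exchanging the order of
integration with `∫_v^∞ r^{-(1+2η)} dr = v^{-2η} / (2η)` bounds it by `(1/η) ∫₀¹ k(v)² v^{-2η} dv`.
Since this bound does not depend on `t`, integrating it over `(0, 1]` keeps it.
-/

open MeasureTheory Set
open scoped ENNReal

theorem setLIntegral_Ioc_comp_sub_left (g : ℝ → ℝ≥0∞) (m M : ℝ) :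
    ∫⁻ u in Ioc m M, g (M - u) = ∫⁻ v in Ioo 0 (M - m), g v := by
  have h := (Measure.measurePreserving_sub_left volume M).setLIntegral_comp_preimage_emb
    (MeasurableEquiv.subLeft M).measurableEmbedding (fun u => g (M - u)) (Ioc m M)
  have hpre : (fun v : ℝ => M - v) ⁻¹' Ioc m M = Ico 0 (M - m) := by
    ext v
    simp only [mem_preimage, mem_Ioc, mem_Ico]
    constructor <;> rintro ⟨h1, h2⟩ <;> constructor <;> linarith
  simp only [hpre, sub_sub_cancel] at h
  rw [← h, restrict_Ioo_eq_restrict_Ico]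

theorem lintegral_comp_abs (g : ℝ → ℝ≥0∞) :
    ∫⁻ x, g |x| = 2 * ∫⁻ x in Ioi 0, g x := by
  have hIoi : ∫⁻ x in Ioi 0, g |x| = ∫⁻ x in Ioi 0, g x :=
    setLIntegral_congr_fun measurableSet_Ioi fun x hx => by rw [abs_of_pos hx]
  have hIic : ∫⁻ x in Iic 0, g |x| = ∫⁻ x in Ioi 0, g x := by
    have h := (Measure.measurePreserving_neg (volume : Measure ℝ)).setLIntegral_comp_preimage_emb
      (Homeomorph.neg ℝ).measurableEmbedding (fun x => g |x|) (Iic 0)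
    simp only [neg_preimage, neg_Iic, neg_zero, abs_neg] at h
    rw [← h, ← restrict_Ioi_eq_restrict_Ici]
    exact hIoi
  rw [← lintegral_add_compl _ measurableSet_Ioi, compl_Ioi, hIoi, hIic, two_mul]

theorem lintegral_Ioi_inv_rpow {b v : ℝ} (hb : 0 < b) (hv : 0 < v) :
    ∫⁻ r in Ioi v, (ENNReal.ofReal (r ^ (1 + b)))⁻¹ = ENNReal.ofReal (v ^ (-b) / b) := by
  have ha : -(1 + b) < -1 := by linarith
  have hpos : ∀ r ∈ Ioi v, (ENNReal.ofReal (r ^ (1 + b)))⁻¹ = ENNReal.ofReal (r ^ (-(1 + b))) :=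
    fun r hr => by
      have hr : 0 < r := hv.trans hr
      rw [Real.rpow_neg hr.le, ENNReal.ofReal_inv_of_pos (by positivity)]
  rw [setLIntegral_congr_fun measurableSet_Ioi hpos, ← ofReal_integral_eq_lintegral_ofReal
    (integrableOn_Ioi_rpow_of_lt ha hv), integral_Ioi_rpow_of_lt ha hv]
  · rw [show -(1 + b) + 1 = -b by ring, neg_div_neg_eq]
  · filter_upwards [ae_restrict_mem measurableSet_Ioi] with r hr
    exact Real.rpow_nonneg (hv.trans hr).le _

theorem lintegral_Ioi_lintegral_Ioo_swap {F : ℝ → ℝ → ℝ≥0∞}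
    (hF : Measurable (Function.uncurry F)) :
    ∫⁻ r in Ioi 0, ∫⁻ v in Ioo 0 r, F r v = ∫⁻ v in Ioi 0, ∫⁻ r in Ioi v, F r v := by
  set G : ℝ → ℝ → ℝ≥0∞ := fun r v => {p : ℝ × ℝ | 0 < p.2 ∧ p.2 < p.1}.indicator
    (Function.uncurry F) (r, v)
  have hG : Measurable (Function.uncurry G) :=
    hF.indicator ((measurableSet_lt measurable_const measurable_snd).inter
      (measurableSet_lt measurable_snd measurable_fst))
  have hleft : ∫⁻ r in Ioi 0, ∫⁻ v in Ioo 0 r, F r v = ∫⁻ r, ∫⁻ v, G r v := by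
    rw [← lintegral_indicator measurableSet_Ioi]
    congr 1; ext r
    by_cases hr : 0 < r
    · simp only [indicator_of_mem (show r ∈ Ioi 0 from hr),
        ← lintegral_indicator measurableSet_Ioo]
      refine lintegral_congr fun v => ?_
      simp [G, indicator_apply]
    · have hzero : ∀ v, G r v = 0 := fun v =>
        indicator_of_notMem (fun hrv => hr (hrv.1.trans hrv.2)) _
      simp [hr, hzero]
  have hright : ∫⁻ v in Ioi 0, ∫⁻ r in Ioi v, F r v = ∫⁻ v, ∫⁻ r, G r v := by
    rw [← lintegral_indicator measurableSet_Ioi]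
    congr 1; ext v
    by_cases hv : 0 < v
    · simp only [indicator_of_mem (show v ∈ Ioi 0 from hv),
        ← lintegral_indicator measurableSet_Ioi]
      refine lintegral_congr fun r => ?_
      simp [G, indicator_apply, hv]
    · simp [G, hv]
  rw [hleft, hright, lintegral_lintegral_swap hG.aemeasurable]

theorem lintegral_lintegral_Ioo_abs_sub_div_rpow {f : ℝ → ℝ≥0∞} (hf : Measurable f) {b : ℝ}
    (hb : 0 < b) (t : ℝ) :
    ∫⁻ s, (∫⁻ v in Ioo 0 |t - s|, f v) / ENNReal.ofReal (|t - s| ^ (1 + b)) =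
      ENNReal.ofReal (2 / b) * ∫⁻ v in Ioi 0, f v * ENNReal.ofReal (v ^ (-b)) := by
  set w : ℝ → ℝ≥0∞ := fun r => (ENNReal.ofReal (r ^ (1 + b)))⁻¹
  have hw : Measurable w := (measurable_id.pow_const _).ennreal_ofReal.inv
  calc ∫⁻ s, (∫⁻ v in Ioo 0 |t - s|, f v) / ENNReal.ofReal (|t - s| ^ (1 + b))
      = ∫⁻ s, (∫⁻ v in Ioo 0 |s|, f v) * w |s| := by
        simp only [div_eq_mul_inv]
        exact lintegral_sub_left_eq_self (fun s => (∫⁻ v in Ioo 0 |s|, f v) * w |s|) t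
    _ = 2 * ∫⁻ r in Ioi 0, ∫⁻ v in Ioo 0 r, f v * w r := by
        simp only [lintegral_comp_abs (fun r => (∫⁻ v in Ioo 0 r, f v) * w r),
          lintegral_mul_const _ hf]
    _ = 2 * ∫⁻ v in Ioi 0, ∫⁻ r in Ioi v, f v * w r := by
        rw [lintegral_Ioi_lintegral_Ioo_swap (F := fun r v => f v * w r)
          ((hf.comp measurable_snd).mul (hw.comp measurable_fst))]
    _ = 2 * ∫⁻ v in Ioi 0, f v * ENNReal.ofReal (v ^ (-b) / b) := by
        congr 1
        refine setLIntegral_congr_fun measurableSet_Ioi fun v hv => ?_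
        rw [lintegral_const_mul _ hw, lintegral_Ioi_inv_rpow hb hv]
    _ = ENNReal.ofReal (2 / b) * ∫⁻ v in Ioi 0, f v * ENNReal.ofReal (v ^ (-b)) := by
        have h2b : (2 : ℝ≥0∞) * ENNReal.ofReal b⁻¹ = ENNReal.ofReal (2 / b) := by
          rw [div_eq_mul_inv, ENNReal.ofReal_mul zero_le_two, ENNReal.ofReal_ofNat]
        rw [← h2b, mul_assoc, mul_comm (ENNReal.ofReal b⁻¹),
          ← lintegral_mul_const' _ _ ENNReal.ofReal_ne_top]
        congr 1
        refine setLIntegral_congr_fun measurableSet_Ioi fun v hv => ?_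
        rw [div_eq_mul_inv, ENNReal.ofReal_mul (Real.rpow_nonneg hv.le _), mul_assoc]

theorem lintegral_Ioc_lintegral_min_max_div_rpow_le {f : ℝ → ℝ≥0∞} (hf : Measurable f) {b : ℝ}
    (hb : 0 < b) {t : ℝ} (ht : t ∈ Ioc 0 1) :
    ∫⁻ s in Ioc 0 1, (∫⁻ u in Ioc (min s t) (max s t), f (max s t - u)) /
        ENNReal.ofReal (|t - s| ^ (1 + b)) ≤
      ENNReal.ofReal (2 / b) * ∫⁻ v in Ioc 0 1, f v * ENNReal.ofReal (v ^ (-b)) := by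
  -- Cutting `f` off outside `(0, 1]` is invisible while `s, t ∈ (0, 1]` (then `|t - s| ≤ 1`),
  -- and it confines the right-hand side to `(0, 1]` once `s` ranges over all of `ℝ`.
  set g := (Ioc (0 : ℝ) 1).indicator f
  have hg_eq : ∀ s ∈ Ioc (0 : ℝ) 1, ∫⁻ u in Ioc (min s t) (max s t), f (max s t - u) =
      ∫⁻ v in Ioo 0 |t - s|, g v := by
    intro s hs
    have hts : |t - s| ≤ 1 :=
      abs_sub_le_iff.mpr ⟨by linarith [hs.1, ht.2], by linarith [hs.2, ht.1]⟩
    rw [setLIntegral_Ioc_comp_sub_left, max_sub_min_eq_abs]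
    refine setLIntegral_congr_fun measurableSet_Ioo fun v hv => ?_
    exact (indicator_of_mem (show v ∈ Ioc 0 1 from ⟨hv.1, hv.2.le.trans hts⟩) f).symm
  calc ∫⁻ s in Ioc 0 1, (∫⁻ u in Ioc (min s t) (max s t), f (max s t - u)) /
          ENNReal.ofReal (|t - s| ^ (1 + b))
      = ∫⁻ s in Ioc 0 1, (∫⁻ v in Ioo 0 |t - s|, g v) / ENNReal.ofReal (|t - s| ^ (1 + b)) :=
        setLIntegral_congr_fun measurableSet_Ioc fun s hs => by rw [hg_eq s hs]
    _ ≤ ∫⁻ s, (∫⁻ v in Ioo 0 |t - s|, g v) / ENNReal.ofReal (|t - s| ^ (1 + b)) :=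
        setLIntegral_le_lintegral _ _
    _ = ENNReal.ofReal (2 / b) * ∫⁻ v in Ioi 0, g v * ENNReal.ofReal (v ^ (-b)) :=
        lintegral_lintegral_Ioo_abs_sub_div_rpow (hf.indicator measurableSet_Ioc) hb t
    _ = ENNReal.ofReal (2 / b) * ∫⁻ v in Ioc 0 1, f v * ENNReal.ofReal (v ^ (-b)) := by
        have hgw : ∀ v, g v * ENNReal.ofReal (v ^ (-b)) =
            (Ioc 0 1).indicator (fun v => f v * ENNReal.ofReal (v ^ (-b))) v :=
          fun v => (indicator_mul_left _ f fun v => ENNReal.ofReal (v ^ (-b))).symm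
        rw [lintegral_congr hgw,
          setLIntegral_indicator measurableSet_Ioc, inter_eq_left.mpr Ioc_subset_Ioi_self]

theorem stmt3_general (k : ℝ → ℝ) (η : ℝ) (hη : η ∈ Ioo (0:ℝ) 1)
    (hkm : Measurable k) :
    (∫⁻ t in Ioc (0:ℝ) 1, ∫⁻ s in Ioc (0:ℝ) 1,
        (∫⁻ u in Ioc (min s t) (max s t), ENNReal.ofReal (k (max s t - u) ^ 2)) /
          ENNReal.ofReal (|t - s| ^ (1 + 2 * η)))
      ≤ ENNReal.ofReal (1 / η) *
          ∫⁻ t in Ioc (0:ℝ) 1, ENNReal.ofReal (k t ^ 2 * t ^ (-(2 * η))) := by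
  have hb : 0 < 2 * η := by linarith [hη.1]
  set C := ENNReal.ofReal (1 / η) * ∫⁻ t in Ioc (0:ℝ) 1, ENNReal.ofReal (k t ^ 2 * t ^ (-(2 * η)))
  have hinner : ∀ t ∈ Ioc (0 : ℝ) 1, ∫⁻ s in Ioc (0:ℝ) 1,
      (∫⁻ u in Ioc (min s t) (max s t), ENNReal.ofReal (k (max s t - u) ^ 2)) /
        ENNReal.ofReal (|t - s| ^ (1 + 2 * η)) ≤ C := by
    intro t ht
    convert lintegral_Ioc_lintegral_min_max_div_rpow_le (hkm.pow_const 2).ennreal_ofReal hb ht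
      using 2
    · rw [div_mul_cancel_left₀ two_ne_zero, one_div]
    · simp only [ENNReal.ofReal_mul (sq_nonneg _)]
  calc _ ≤ ∫⁻ _ in Ioc (0:ℝ) 1, C := setLIntegral_mono measurable_const hinner
    _ = C := by simp [Real.volume_Ioc]

/-- Sobolev–Slobodeckij bound: for `k ∈ L²([0,1])` and `η ∈ (0,1)`,
`∫₀¹∫₀¹ |t-s|^{-(1+2η)} ∫_{s∧t}^{s∨t} k(s∨t - u)² du ds dt ≤ (1/η) ∫₀¹ k(t)² t^{-2η} dt`,
stated in `ℝ≥0∞` so that both sides may be infinite. -/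
theorem stmt3 (k : ℝ → ℝ) (η : ℝ) (hη : η ∈ Ioo (0:ℝ) 1)
    (hkm : Measurable k)
    (hk : MemLp k 2 (volume.restrict (Ioc (0:ℝ) 1))) :
    (∫⁻ t in Ioc (0:ℝ) 1, ∫⁻ s in Ioc (0:ℝ) 1,
        (∫⁻ u in Ioc (min s t) (max s t), ENNReal.ofReal (k (max s t - u) ^ 2)) /
          ENNReal.ofReal (|t - s| ^ (1 + 2 * η)))
      ≤ ENNReal.ofReal (1 / η) *
          ∫⁻ t in Ioc (0:ℝ) 1, ENNReal.ofReal (k t ^ 2 * t ^ (-(2 * η))) :=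
  stmt3_general k η hη hkm
end

section
/- Let $k : [0,1] \to \mathbb{R}$ be measurable and $\eta \in (0,1)$. Then $\int_0^1 \int_0^1 \frac{1}{|t-s|^{1+2\eta}} \int_0^{s \wedge t} |k(s \vee t - u) - k(s \wedge t - u)|^2 \, du \, ds \, dt \le \int_0^1 \int_0^1 \frac{|k(t) - k(s)|^2}{|t-s|^{1+2\eta}} \, ds \, dt.$ -/
open MeasureTheory Set
open scoped ENNReal

set_option maxHeartbeats 1000000

private noncomputable def stmt4G (k : ℝ → ℝ) (η : ℝ) (t s : ℝ) : ℝ≥0∞ :=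
  ENNReal.ofReal (|k t - k s| ^ 2) / ENNReal.ofReal (|t - s| ^ (1 + 2 * η))

private noncomputable def stmt4Psi (k : ℝ → ℝ) (η : ℝ) (t s u : ℝ) : ℝ≥0∞ :=
  (Ioc 0 (min s t)).indicator (fun u => stmt4G k η (t - u) (s - u)) u

private lemma stmt4Psi_meas (k : ℝ → ℝ) (η : ℝ) (hkm : Measurable k) :
    Measurable (fun p : ℝ × ℝ × ℝ => stmt4Psi k η p.1 p.2.1 p.2.2) := by
  have h : (fun p : ℝ × ℝ × ℝ => stmt4Psi k η p.1 p.2.1 p.2.2)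
      = ({p : ℝ × ℝ × ℝ | 0 < p.2.2 ∧ p.2.2 ≤ p.2.1 ∧ p.2.2 ≤ p.1}).indicator
        (fun p => stmt4G k η (p.1 - p.2.2) (p.2.1 - p.2.2)) := by
    funext p
    simp only [stmt4Psi, Set.indicator_apply, Set.mem_Ioc, le_min_iff, Set.mem_setOf_eq,
      and_assoc]
  rw [h]
  apply Measurable.indicator
  · unfold stmt4G
    apply Measurable.div
    · exact (((hkm.comp (measurable_fst.sub measurable_snd.snd)).sub
        (hkm.comp (measurable_snd.fst.sub measurable_snd.snd))).abs.pow
        measurable_const).ennreal_ofReal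
    · exact ((((measurable_fst.sub measurable_snd.snd).sub
        (measurable_snd.fst.sub measurable_snd.snd)).abs).pow measurable_const).ennreal_ofReal
  · refine MeasurableSet.inter (measurableSet_lt measurable_const measurable_snd.snd) ?_
    exact MeasurableSet.inter (measurableSet_le measurable_snd.snd measurable_snd.fst)
      (measurableSet_le measurable_snd.snd measurable_fst)

/-- Sobolev–Slobodeckij bound for the shifted-kernel increments: for measurable
`k : [0,1] → ℝ` and `η ∈ (0,1)`,
`∫₀¹∫₀¹ |t-s|^{-(1+2η)} ∫₀^{s∧t} |k(s∨t-u) - k(s∧t-u)|² du ds dt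
  ≤ ∫₀¹∫₀¹ |k(t)-k(s)|²/|t-s|^{1+2η} ds dt`,
stated in `ℝ≥0∞` so that both sides may be infinite. -/
theorem stmt4 (k : ℝ → ℝ) (η : ℝ) (hη : η ∈ Ioo (0:ℝ) 1)
    (hkm : Measurable k) :
    (∫⁻ t in Ioc (0:ℝ) 1, ∫⁻ s in Ioc (0:ℝ) 1,
        (∫⁻ u in Ioc (0:ℝ) (min s t),
            ENNReal.ofReal (|k (max s t - u) - k (min s t - u)| ^ 2)) /
          ENNReal.ofReal (|t - s| ^ (1 + 2 * η)))
      ≤ ∫⁻ t in Ioc (0:ℝ) 1, ∫⁻ s in Ioc (0:ℝ) 1,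
          ENNReal.ofReal (|k t - k s| ^ 2) / ENNReal.ofReal (|t - s| ^ (1 + 2 * η)) := by
  have hΨm := stmt4Psi_meas k η hkm
  -- Step 1: rewrite the LHS
  have step1 : (∫⁻ t in Ioc (0:ℝ) 1, ∫⁻ s in Ioc (0:ℝ) 1,
        (∫⁻ u in Ioc (0:ℝ) (min s t),
            ENNReal.ofReal (|k (max s t - u) - k (min s t - u)| ^ 2)) /
          ENNReal.ofReal (|t - s| ^ (1 + 2 * η)))
      = ∫⁻ t in Ioc (0:ℝ) 1, ∫⁻ s in Ioc (0:ℝ) 1, ∫⁻ u in Ioc (0:ℝ) 1, stmt4Psi k η t s u := by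
    refine lintegral_congr_ae (((ae_restrict_mem measurableSet_Ioc)).mono fun t ht => ?_)
    refine lintegral_congr_ae (((ae_restrict_mem measurableSet_Ioc)).mono fun s hs => ?_)
    have h1 : ∀ u : ℝ, ENNReal.ofReal (|k (max s t - u) - k (min s t - u)| ^ 2)
        = ENNReal.ofReal (|k (t - u) - k (s - u)| ^ 2) := by
      intro u
      rcases le_total s t with h | h
      · rw [max_eq_right h, min_eq_left h]
      · rw [max_eq_left h, min_eq_right h, abs_sub_comm]
    have hmeas : Measurable fun u : ℝ => ENNReal.ofReal (|k (t - u) - k (s - u)| ^ 2) :=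
      (((hkm.comp (measurable_const.sub measurable_id)).sub
        (hkm.comp (measurable_const.sub measurable_id))).abs.pow measurable_const).ennreal_ofReal
    calc (∫⁻ u in Ioc (0:ℝ) (min s t),
            ENNReal.ofReal (|k (max s t - u) - k (min s t - u)| ^ 2)) /
          ENNReal.ofReal (|t - s| ^ (1 + 2 * η))
        = ∫⁻ u in Ioc (0:ℝ) (min s t), stmt4G k η (t - u) (s - u) := by
          simp_rw [h1]
          rw [div_eq_mul_inv, ← lintegral_mul_const _ hmeas]
          refine lintegral_congr fun u => ?_
          simp only [stmt4G]
          rw [sub_sub_sub_cancel_right, div_eq_mul_inv]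
      _ = ∫⁻ u in Ioc (0:ℝ) 1, stmt4Psi k η t s u := by
          simp only [stmt4Psi]
          rw [lintegral_indicator measurableSet_Ioc,
            Measure.restrict_restrict measurableSet_Ioc,
            inter_eq_left.mpr]
          intro u hu
          exact ⟨hu.1, hu.2.trans ((min_le_left s t).trans hs.2)⟩
  -- Step 2: swap integrals so that u is outermost
  have step2 : (∫⁻ t in Ioc (0:ℝ) 1, ∫⁻ s in Ioc (0:ℝ) 1, ∫⁻ u in Ioc (0:ℝ) 1,
        stmt4Psi k η t s u)
      = ∫⁻ u in Ioc (0:ℝ) 1, ∫⁻ t in Ioc (0:ℝ) 1, ∫⁻ s in Ioc (0:ℝ) 1, stmt4Psi k η t s u := by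
    have e1 : ∀ t : ℝ, (∫⁻ s in Ioc (0:ℝ) 1, ∫⁻ u in Ioc (0:ℝ) 1, stmt4Psi k η t s u)
        = ∫⁻ u in Ioc (0:ℝ) 1, ∫⁻ s in Ioc (0:ℝ) 1, stmt4Psi k η t s u := by
      intro t
      exact lintegral_lintegral_swap ((hΨm.comp measurable_prodMk_left).aemeasurable)
    simp_rw [e1]
    exact lintegral_lintegral_swap
      ((Measurable.lintegral_prod_right'
        (hΨm.comp ((measurable_fst.fst).prodMk
          ((measurable_snd).prodMk (measurable_fst.snd))))).aemeasurable)
  -- key bound for fixed u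
  have key : ∀ u ∈ Ioc (0:ℝ) 1, (∫⁻ t in Ioc (0:ℝ) 1, ∫⁻ s in Ioc (0:ℝ) 1, stmt4Psi k η t s u)
      ≤ ∫⁻ t in Ioc (0:ℝ) 1, ∫⁻ s in Ioc (0:ℝ) 1, stmt4G k η t s := by
    intro u hu
    have hu0 : (0:ℝ) < u := hu.1
    have hpt : ∀ t s : ℝ, stmt4Psi k η t s u
        = (Ici u).indicator
            (fun t => (Ici u).indicator (fun s => stmt4G k η (t - u) (s - u)) s) t := by
      intro t s
      simp only [stmt4Psi, Set.indicator_apply, Set.mem_Ioc, Set.mem_Ici, le_min_iff]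
      by_cases h1 : u ≤ s <;> by_cases h2 : u ≤ t <;> simp [h1, h2, hu0]
    have hBsub : ∀ g : ℝ → ℝ≥0∞,
        (∫⁻ x in Ioc (0:ℝ) 1, (Ici u).indicator g x) = ∫⁻ x in Ici u ∩ Ioc (0:ℝ) 1, g x := by
      intro g
      rw [lintegral_indicator measurableSet_Ici,
        Measure.restrict_restrict measurableSet_Ici]
    have hin : ∀ t : ℝ, (∫⁻ s in Ioc (0:ℝ) 1, stmt4Psi k η t s u)
        = (Ici u).indicator
            (fun t => ∫⁻ s in Ici u ∩ Ioc (0:ℝ) 1, stmt4G k η (t - u) (s - u)) t := by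
      intro t
      by_cases h2 : t ∈ Ici u
      · rw [Set.indicator_of_mem h2]
        calc (∫⁻ s in Ioc (0:ℝ) 1, stmt4Psi k η t s u)
            = ∫⁻ s in Ioc (0:ℝ) 1,
                (Ici u).indicator (fun s => stmt4G k η (t - u) (s - u)) s := by
              refine lintegral_congr fun s => ?_
              rw [hpt t s, Set.indicator_of_mem h2]
          _ = _ := hBsub _
      · rw [Set.indicator_of_notMem h2]
        have : ∀ s : ℝ, stmt4Psi k η t s u = 0 := by
          intro s; rw [hpt t s, Set.indicator_of_notMem h2]
        simp [this]
    simp_rw [hin]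
    rw [hBsub]
    have htrans : ∀ g : ℝ → ℝ≥0∞,
        (∫⁻ x in Ici u ∩ Ioc (0:ℝ) 1, g (x - u)) ≤ ∫⁻ x in Ioc (0:ℝ) 1, g x := by
      intro g
      have h := (measurePreserving_add_right (volume : Measure ℝ) u).setLIntegral_comp_preimage_emb
        (measurableEmbedding_addRight u) (fun x => g (x - u)) (Ici u ∩ Ioc (0:ℝ) 1)
      simp only [add_sub_cancel_right] at h
      rw [← h]
      refine lintegral_mono_set' ?_
      have h0 : (volume : Measure ℝ) {(0:ℝ)} = 0 := measure_singleton 0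
      refine Filter.Eventually.mono ((measure_eq_zero_iff_ae_notMem (μ := volume)).mp h0) ?_
      intro x hx hxB
      have hxB' : x + u ∈ Ici u ∩ Ioc (0:ℝ) 1 := hxB
      obtain ⟨hxa, hxb⟩ := hxB'
      have hx0 : 0 ≤ x := by
        have := Set.mem_Ici.mp hxa; linarith
      have hx1 : x + u ≤ 1 := hxb.2
      rcases lt_or_eq_of_le hx0 with h' | h'
      · exact ⟨h', by linarith⟩
      · exact absurd h'.symm (by simpa using hx)
    refine le_trans
      (htrans (fun t => ∫⁻ s in Ici u ∩ Ioc (0:ℝ) 1, stmt4G k η t (s - u))) ?_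
    exact lintegral_mono fun t => htrans (fun s => stmt4G k η t s)
  calc (∫⁻ t in Ioc (0:ℝ) 1, ∫⁻ s in Ioc (0:ℝ) 1,
        (∫⁻ u in Ioc (0:ℝ) (min s t),
            ENNReal.ofReal (|k (max s t - u) - k (min s t - u)| ^ 2)) /
          ENNReal.ofReal (|t - s| ^ (1 + 2 * η)))
      = ∫⁻ u in Ioc (0:ℝ) 1, ∫⁻ t in Ioc (0:ℝ) 1, ∫⁻ s in Ioc (0:ℝ) 1,
          stmt4Psi k η t s u := by rw [step1, step2]
    _ ≤ ∫⁻ _u in Ioc (0:ℝ) 1, ∫⁻ t in Ioc (0:ℝ) 1, ∫⁻ s in Ioc (0:ℝ) 1, stmt4G k η t s := by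
        refine lintegral_mono_ae (((ae_restrict_mem measurableSet_Ioc)).mono fun u hu => ?_)
        exact key u hu
    _ = ∫⁻ t in Ioc (0:ℝ) 1, ∫⁻ s in Ioc (0:ℝ) 1, stmt4G k η t s := by
        rw [setLIntegral_const, Real.volume_Ioc]
        norm_num
    _ = ∫⁻ t in Ioc (0:ℝ) 1, ∫⁻ s in Ioc (0:ℝ) 1,
          ENNReal.ofReal (|k t - k s| ^ 2) / ENNReal.ofReal (|t - s| ^ (1 + 2 * η)) := by
        simp only [stmt4G]
end
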